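/- arXiv:2505.13351 — 3 statements merged into one kernel-verified Lean document; each statement's English description precedes it below -/
import Mathlib

section
/- Let A : ℓ^∞ → ℓ² be a bounded linear map. The bracket [X, Y](x) := DY(x)(A(X(x))) − DX(x)(A(Y(x))) on smooth maps X, Y : ℓ² → ℓ^∞ satisfies the Jacobi identity: [X, [Y, Z]] + [Y, [Z, X]] + [Z, [X, Y]] = 0 for all smooth X, Y, Z : ℓ² → ℓ^∞. -/
noncomputable abbrev ellTwo : Type := lp (fun _ : ℕ => ℝ) 2
noncomputable abbrev ellInf : Type := lp (fun _ : ℕ => ℝ) ⊤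

/-- The algebroid bracket `[X, Y](x) = DY(x)(A X(x)) − DX(x)(A Y(x))`. -/
noncomputable def algBracket (A : ellInf →L[ℝ] ellTwo)
    (X Y : ellTwo → ellInf) : ellTwo → ellInf :=
  fun x => fderiv ℝ Y x (A (X x)) - fderiv ℝ X x (A (Y x))

section aux

variable (A : ellInf →L[ℝ] ellTwo)

lemma aux_comp_fderiv (V : ellTwo → ellInf) (hV : ContDiff ℝ (⊤ : ℕ∞) V) (x : ellTwo) :
    fderiv ℝ (fun y => A (V y)) x = A.comp (fderiv ℝ V x) :=
  (A.hasFDerivAt.comp x (hV.differentiable (by simp) x).hasFDerivAt).fderiv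

lemma aux_diff_term (W V : ellTwo → ellInf) (hW : ContDiff ℝ (⊤ : ℕ∞) W) (hV : ContDiff ℝ (⊤ : ℕ∞) V)
    (x : ellTwo) :
    DifferentiableAt ℝ (fun y => fderiv ℝ W y (A (V y))) x := by
  have h1 : DifferentiableAt ℝ (fderiv ℝ W) x :=
    ((hW.fderiv_right (m := (⊤ : ℕ∞)) (by simp)).differentiable (by simp)) x
  have h2 : DifferentiableAt ℝ (fun y => A (V y)) x :=
    A.differentiableAt.comp x ((hV.differentiable (by simp)) x)
  exact h1.clm_apply h2

lemma aux_key (W V : ellTwo → ellInf) (hW : ContDiff ℝ (⊤ : ℕ∞) W) (hV : ContDiff ℝ (⊤ : ℕ∞) V)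
    (x v : ellTwo) :
    fderiv ℝ (fun y => fderiv ℝ W y (A (V y))) x v
      = fderiv ℝ (fderiv ℝ W) x v (A (V x))
        + fderiv ℝ W x (A (fderiv ℝ V x v)) := by
  have h1 : DifferentiableAt ℝ (fderiv ℝ W) x :=
    ((hW.fderiv_right (m := (⊤ : ℕ∞)) (by simp)).differentiable (by simp)) x
  have h2 : DifferentiableAt ℝ (fun y => A (V y)) x :=
    A.differentiableAt.comp x ((hV.differentiable (by simp)) x)
  rw [fderiv_clm_apply h1 h2]
  simp [aux_comp_fderiv A V hV x, add_comm]

lemma aux_fderiv_bracket (Y Z : ellTwo → ellInf) (hY : ContDiff ℝ (⊤ : ℕ∞) Y) (hZ : ContDiff ℝ (⊤ : ℕ∞) Z)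
    (x v : ellTwo) :
    fderiv ℝ (algBracket A Y Z) x v
      = (fderiv ℝ (fderiv ℝ Z) x v (A (Y x)) + fderiv ℝ Z x (A (fderiv ℝ Y x v)))
        - (fderiv ℝ (fderiv ℝ Y) x v (A (Z x)) + fderiv ℝ Y x (A (fderiv ℝ Z x v))) := by
  have h : algBracket A Y Z
      = fun y => (fun y => fderiv ℝ Z y (A (Y y))) y - (fun y => fderiv ℝ Y y (A (Z y))) y := rfl
  rw [h, fderiv_fun_sub (aux_diff_term A Z Y hZ hY x) (aux_diff_term A Y Z hY hZ x),
    ContinuousLinearMap.sub_apply, aux_key A Z Y hZ hY x v, aux_key A Y Z hY hZ x v]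

end aux

/-- the bracket satisfies the Jacobi identity on smooth maps. -/
theorem stmt3 (A : ellInf →L[ℝ] ellTwo)
    (X Y Z : ellTwo → ellInf)
    (hX : ContDiff ℝ (⊤ : ℕ∞) X) (hY : ContDiff ℝ (⊤ : ℕ∞) Y) (hZ : ContDiff ℝ (⊤ : ℕ∞) Z) :
    ∀ x : ellTwo,
      algBracket A X (algBracket A Y Z) x
        + algBracket A Y (algBracket A Z X) x
        + algBracket A Z (algBracket A X Y) x = 0 := by
  intro x
  have hsym : ∀ (W : ellTwo → ellInf), ContDiff ℝ (⊤ : ℕ∞) W → ∀ u v : ellTwo,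
      fderiv ℝ (fderiv ℝ W) x u v = fderiv ℝ (fderiv ℝ W) x v u := by
    intro W hW u v
    exact hW.contDiffAt.isSymmSndFDerivAt (by rw [minSmoothness_of_isRCLikeNormedField]; exact WithTop.coe_le_coe.mpr (le_top : (2 : ℕ∞) ≤ ⊤)) u v
  have e1 : algBracket A X (algBracket A Y Z) x
      = fderiv ℝ (algBracket A Y Z) x (A (X x))
        - fderiv ℝ X x (A (algBracket A Y Z x)) := rfl
  have e2 : algBracket A Y (algBracket A Z X) x
      = fderiv ℝ (algBracket A Z X) x (A (Y x))
        - fderiv ℝ Y x (A (algBracket A Z X x)) := rfl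
  have e3 : algBracket A Z (algBracket A X Y) x
      = fderiv ℝ (algBracket A X Y) x (A (Z x))
        - fderiv ℝ Z x (A (algBracket A X Y x)) := rfl
  rw [e1, e2, e3,
    aux_fderiv_bracket A Y Z hY hZ x (A (X x)),
    aux_fderiv_bracket A Z X hZ hX x (A (Y x)),
    aux_fderiv_bracket A X Y hX hY x (A (Z x))]
  simp only [algBracket, map_sub]
  rw [hsym Z hZ (A (X x)) (A (Y x)), hsym X hX (A (Y x)) (A (Z x)),
    hsym Y hY (A (Z x)) (A (X x))]
  abel
end

section
/- Let 𝕄, 𝔼 be Banach spaces, a : 𝔼 → 𝕄 bounded linear, C : 𝔼 × 𝔼 → 𝔼 bounded bilinear and skew-symmetric, and 𝔼_* a predual of 𝔼. Define for C¹ functions f, g on U × 𝔼_* (U ⊆ 𝕄 open), with ∂f/∂m ∈ 𝕄* and ∂f/∂φ ∈ (𝔼_*)* = 𝔼: {f, g}(m, φ) := ⟨a(∂f/∂φ), ∂g/∂m⟩ − ⟨a(∂g/∂φ), ∂f/∂m⟩ + ⟨φ, C(∂f/∂φ, ∂g/∂φ)⟩. Then for the special functions f = h∘π (h : U → ℝ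 smooth, π the projection) and λ_X(m, φ) = ⟨φ, X(m)⟩ (X : U → 𝔼 smooth), one has: {h₁∘π, h₂∘π} = 0; {λ_X, h∘π}(m, φ) = dh(m)(a(X(m))); and {λ_X, λ_Y}(m, φ) = ⟨φ, DY(m)(a(X(m))) − DX(m)(a(Y(m))) + C(X(m), Y(m))⟩ = λ_{[X,Y]}(m,φ), where [X,Y](m) := DY(m)(a(X(m))) − DX(m)(a(Y(m))) + C(X(m), Y(m)). -/
/-- The linear Poisson bracket on `U × 𝔼_*` in a trivialization of the predual
of a Banach Lie algebroid with anchor `a` and structure bilinear map `C`: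
`{f,g} = ⟨a(∂f/∂φ), ∂g/∂m⟩ − ⟨a(∂g/∂φ), ∂f/∂m⟩ + ⟨φ, C(∂f/∂φ, ∂g/∂φ)⟩`. -/
noncomputable def algPB {M P : Type*}
    [NormedAddCommGroup M] [NormedSpace ℝ M]
    [NormedAddCommGroup P] [NormedSpace ℝ P]
    (a : (P →L[ℝ] ℝ) →L[ℝ] M)
    (C : (P →L[ℝ] ℝ) →L[ℝ] (P →L[ℝ] ℝ) →L[ℝ] (P →L[ℝ] ℝ))
    (f g : M × P → ℝ) (q : M × P) : ℝ :=
  (fderiv ℝ (fun m => g (m, q.2)) q.1) (a (fderiv ℝ (fun φ => f (q.1, φ)) q.2))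
    - (fderiv ℝ (fun m => f (m, q.2)) q.1) (a (fderiv ℝ (fun φ => g (q.1, φ)) q.2))
    + (C (fderiv ℝ (fun φ => f (q.1, φ)) q.2) (fderiv ℝ (fun φ => g (q.1, φ)) q.2)) q.2

lemma fderiv_eval {M P : Type*}
    [NormedAddCommGroup M] [NormedSpace ℝ M]
    [NormedAddCommGroup P] [NormedSpace ℝ P]
    (X : M → (P →L[ℝ] ℝ)) (hX : ContDiff ℝ (⊤ : ℕ∞) X) (m : M) (φ : P) :
    fderiv ℝ (fun m' => X m' φ) m = (ContinuousLinearMap.apply ℝ ℝ φ).comp (fderiv ℝ X m) :=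
  ((ContinuousLinearMap.apply ℝ ℝ φ).hasFDerivAt.comp m
    (hX.differentiable (by simp) m).hasFDerivAt).fderiv

/-- on fiberwise-constant functions the bracket vanishes, the
mixed bracket is the anchor action, and on fiberwise-linear functions it
reproduces the local algebroid bracket
`[X,Y](m) = DY(m)(a(X(m))) − DX(m)(a(Y(m))) + C(X(m),Y(m))`. -/
theorem stmt14 {M P : Type*}
    [NormedAddCommGroup M] [NormedSpace ℝ M] [CompleteSpace M]
    [NormedAddCommGroup P] [NormedSpace ℝ P] [CompleteSpace P]
    (a : (P →L[ℝ] ℝ) →L[ℝ] M)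
    (C : (P →L[ℝ] ℝ) →L[ℝ] (P →L[ℝ] ℝ) →L[ℝ] (P →L[ℝ] ℝ))
    (hC : ∀ x y : P →L[ℝ] ℝ, C x y = - C y x)
    (h₁ h₂ h : M → ℝ) (hh₁ : ContDiff ℝ (⊤ : ℕ∞) h₁) (hh₂ : ContDiff ℝ (⊤ : ℕ∞) h₂)
    (hh : ContDiff ℝ (⊤ : ℕ∞) h)
    (X Y : M → (P →L[ℝ] ℝ)) (hX : ContDiff ℝ (⊤ : ℕ∞) X) (hY : ContDiff ℝ (⊤ : ℕ∞) Y)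
    (m : M) (φ : P) :
    algPB a C (fun q => h₁ q.1) (fun q => h₂ q.1) (m, φ) = 0 ∧
    algPB a C (fun q => X q.1 q.2) (fun q => h q.1) (m, φ)
      = fderiv ℝ h m (a (X m)) ∧
    algPB a C (fun q => X q.1 q.2) (fun q => Y q.1 q.2) (m, φ)
      = (fderiv ℝ Y m (a (X m)) - fderiv ℝ X m (a (Y m)) + C (X m) (Y m)) φ := by
  have hf : ∀ (c : ℝ), fderiv ℝ (fun _ : P => c) φ = 0 := fun c => fderiv_const_apply c
  have hXφ : ∀ m', fderiv ℝ (fun φ' => X m' φ') φ = X m' := fun m' => (X m').fderiv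
  have hYφ : ∀ m', fderiv ℝ (fun φ' => Y m' φ') φ = Y m' := fun m' => (Y m').fderiv
  refine ⟨?_, ?_, ?_⟩
  · simp [algPB, hf]
  · simp [algPB, hf, hXφ]
  · simp only [algPB, hXφ, hYφ, fderiv_eval X hX, fderiv_eval Y hY,
      ContinuousLinearMap.coe_comp', Function.comp_apply,
      ContinuousLinearMap.apply_apply, ContinuousLinearMap.add_apply,
      ContinuousLinearMap.sub_apply]
end

section
/- Let 𝕄 be a Banach space, 𝕄_* a closed subspace of 𝕄* that separates points of 𝕄, and ω((v,Φ),(w,Ψ)) = Φ(w) − Ψ(v) the canonical weak symplectic bilinear form on 𝕄 × 𝕄_*. For a covector (μ, x) ∈ 𝕄* × 𝕄 ≅ (𝕄 × 𝕄_*)* (using (𝕄_*)* = 𝕄), the equation ω((v, Φ), ·) = (μ, x) has a solution (v, Φ) ∈ 𝕄 × 𝕄_* if and only if μ ∈ 𝕄_*, in which case the solution is unique and equals (v, Φ) = (−x, μ). -/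
/-- for the canonical weak symplectic form
`ω((v,Φ),(w,Ψ)) = Φ(w) − Ψ(v)` on `𝕄 × 𝕄_*` (with `𝕄 = (𝕄_*)*`, the pairing
with covectors being `⟨(μ,x),(w,Ψ)⟩ = μ(w) + Ψ(x)`), the equation
`ω((v,Φ),·) = (μ,x)` is solvable iff `μ ∈ 𝕄_*`, and then the unique solution
is `(v,Φ) = (−x, μ)`. -/
theorem stmt18 {P : Type*} [NormedAddCommGroup P] [NormedSpace ℝ P] [CompleteSpace P]
    (μ : (P →L[ℝ] ℝ) →L[ℝ] ℝ) (x : P →L[ℝ] ℝ) :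
    ((∃ (v : P →L[ℝ] ℝ) (Φ : P),
        ∀ (w : P →L[ℝ] ℝ) (Ψ : P), w Φ - v Ψ = μ w + x Ψ)
      ↔ ∃ φ₀ : P, ∀ w : P →L[ℝ] ℝ, μ w = w φ₀) ∧
    (∀ (v : P →L[ℝ] ℝ) (Φ : P),
        (∀ (w : P →L[ℝ] ℝ) (Ψ : P), w Φ - v Ψ = μ w + x Ψ) →
        v = -x ∧ (∀ w : P →L[ℝ] ℝ, μ w = w Φ)) := by
  constructor
  · constructor
    · rintro ⟨v, Φ, h⟩
      exact ⟨Φ, fun w => by have := h w 0; simpa using this.symm⟩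
    · rintro ⟨φ₀, h⟩
      exact ⟨-x, φ₀, fun w Ψ => by simp [h w]⟩
  · intro v Φ h
    constructor
    · ext Ψ
      have := h 0 Ψ
      simp at this
      simp [ContinuousLinearMap.neg_apply]; linarith
    · intro w
      have := h w 0
      simpa using this.symm
end
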